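/- Define, for ρ ∈ [-1,1] with q = √(1-ρ²): K₁(ρ) = (q + ρ·arccos(-ρ))/(2π), K₂(ρ) = (3ρq + arccos(-ρ)(1+2ρ²))/(2π), K₃₁(ρ) = (q(2+ρ²) + 3ρ·arccos(-ρ))/(2π), and μ_r(ρ) = (1/2)·[ K₁(ρ)·(4K₂(ρ) + 18) − 8·K₃₁(ρ) ]. Then μ_r(1) = 0 and lim_{ρ → 1⁻} μ_r(ρ) / (1-ρ) = −2. -/

import Mathlib

open Real Filter

/-- Cho–Saul ReLU kernel `K₁(ρ) = (q + ρ arccos(-ρ))/(2π)`, `q = √(1-ρ²)`. -/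
noncomputable def K1 (ρ : ℝ) : ℝ :=
  (Real.sqrt (1 - ρ ^ 2) + ρ * Real.arccos (-ρ)) / (2 * π)

/-- Cho–Saul ReLU kernel `K₂(ρ) = (3ρq + arccos(-ρ)(1+2ρ²))/(2π)`. -/
noncomputable def K2 (ρ : ℝ) : ℝ :=
  (3 * ρ * Real.sqrt (1 - ρ ^ 2) + Real.arccos (-ρ) * (1 + 2 * ρ ^ 2)) / (2 * π)

/-- Mixed Cho–Saul ReLU kernel `K₃₁(ρ) = (q(2+ρ²) + 3ρ arccos(-ρ))/(2π)`. -/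
noncomputable def K31 (ρ : ℝ) : ℝ :=
  (Real.sqrt (1 - ρ ^ 2) * (2 + ρ ^ 2) + 3 * ρ * Real.arccos (-ρ)) / (2 * π)

/-- Expected drift `μ_r(ρ) = (1/2)[K₁(4K₂ + 18) − 8K₃₁]` of the correlation
Markov chain of a He-initialized unshaped ReLU MLP. -/
noncomputable def mur (ρ : ℝ) : ℝ :=
  (1 / 2) * (K1 ρ * (4 * K2 ρ + 18) - 8 * K31 ρ)

/-!
On `(-1, 1)` the kernels satisfy `K₁' = arccos(-ρ)/(2π)`, `K₂' = 4K₁` and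
`K₃₁' = 3(ρq + arccos(-ρ))/(2π)`: every `1/q` coming from `q' = -ρ/q` and
`arccos(-ρ)' = 1/q` cancels. Hence `μ_r'` extends continuously to `ρ = 1`, where it
equals `2`, and L'Hôpital's rule at the zero `μ_r(1) = 0` gives the limit `-2`.
-/

open Set

section Derivatives

variable {x : ℝ}

lemma one_sub_sq_pos_of_mem_Ioo (hx : x ∈ Ioo (-1 : ℝ) 1) : 0 < 1 - x ^ 2 := by
  nlinarith [hx.1, hx.2]

lemma hasDerivAt_sqrt_one_sub_sq (hx : x ∈ Ioo (-1 : ℝ) 1) :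
    HasDerivAt (fun y : ℝ => √(1 - y ^ 2)) (-x / √(1 - x ^ 2)) x := by
  have hpos := one_sub_sq_pos_of_mem_Ioo hx
  refine (((hasDerivAt_pow 2 x).const_sub 1).sqrt hpos.ne').congr_deriv ?_
  simp only [Nat.cast_ofNat, Nat.reduceSub, pow_one]
  field_simp

lemma hasDerivAt_arccos_neg (hx : x ∈ Ioo (-1 : ℝ) 1) :
    HasDerivAt (fun y : ℝ => arccos (-y)) (1 / √(1 - x ^ 2)) x := by
  refine ((hasDerivAt_arccos (x := -x) (by linarith [hx.2]) (by linarith [hx.1])).comp x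
    (hasDerivAt_neg x)).congr_deriv ?_
  simp

lemma hasDerivAt_K1 (hx : x ∈ Ioo (-1 : ℝ) 1) : HasDerivAt K1 (arccos (-x) / (2 * π)) x := by
  have hq : √(1 - x ^ 2) ≠ 0 := (sqrt_pos.2 (one_sub_sq_pos_of_mem_Ioo hx)).ne'
  refine (((hasDerivAt_sqrt_one_sub_sq hx).add
    ((hasDerivAt_id' (x := x)).mul (hasDerivAt_arccos_neg hx))).div_const (2 * π)).congr_deriv ?_
  field_simp
  ring

lemma hasDerivAt_K2 (hx : x ∈ Ioo (-1 : ℝ) 1) : HasDerivAt K2 (4 * K1 x) x := by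
  have hpos := one_sub_sq_pos_of_mem_Ioo hx
  have hq : √(1 - x ^ 2) ≠ 0 := (sqrt_pos.2 hpos).ne'
  refine (((((hasDerivAt_id' (x := x)).const_mul 3).mul (hasDerivAt_sqrt_one_sub_sq hx)).add
    ((hasDerivAt_arccos_neg hx).mul (((hasDerivAt_pow 2 x).const_mul 2).const_add 1))).div_const
      (2 * π)).congr_deriv ?_
  rw [K1]
  field_simp
  linear_combination -sq_sqrt hpos.le

lemma hasDerivAt_K31 (hx : x ∈ Ioo (-1 : ℝ) 1) :
    HasDerivAt K31 (3 * (x * √(1 - x ^ 2) + arccos (-x)) / (2 * π)) x := by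
  have hpos := one_sub_sq_pos_of_mem_Ioo hx
  have hq : √(1 - x ^ 2) ≠ 0 := (sqrt_pos.2 hpos).ne'
  refine ((((hasDerivAt_sqrt_one_sub_sq hx).mul ((hasDerivAt_pow 2 x).const_add 2)).add
    (((hasDerivAt_id' (x := x)).const_mul 3).mul (hasDerivAt_arccos_neg hx))).div_const
      (2 * π)).congr_deriv ?_
  simp only [Nat.cast_ofNat, Nat.reduceSub, pow_one]
  field_simp
  linear_combination -x * sq_sqrt hpos.le

end Derivatives

noncomputable def murDeriv (x : ℝ) : ℝ :=
  (1 / 2) * (arccos (-x) / (2 * π) * (4 * K2 x + 18) + 16 * K1 x ^ 2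
    - 12 * (x * √(1 - x ^ 2) + arccos (-x)) / π)

lemma hasDerivAt_mur {x : ℝ} (hx : x ∈ Ioo (-1 : ℝ) 1) : HasDerivAt mur (murDeriv x) x := by
  refine ((((hasDerivAt_K1 hx).mul (((hasDerivAt_K2 hx).const_mul 4).add_const 18)).sub
    ((hasDerivAt_K31 hx).const_mul 8)).const_mul (1 / 2)).congr_deriv ?_
  rw [murDeriv]
  field_simp
  ring

lemma continuous_mur : Continuous mur := by
  unfold mur K1 K2 K31
  fun_prop

lemma continuous_murDeriv : Continuous murDeriv := by
  unfold murDeriv K1 K2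
  fun_prop

lemma K1_one : K1 1 = 1 / 2 := by
  simp only [K1, one_pow, sub_self, sqrt_zero, arccos_neg_one, one_mul, zero_add]
  field_simp

lemma K2_one : K2 1 = 3 / 2 := by
  norm_num [K2, div_eq_iff, pi_ne_zero]
  ring

lemma K31_one : K31 1 = 3 / 2 := by
  norm_num [K31, div_eq_iff, pi_ne_zero]
  ring

lemma mur_one : mur 1 = 0 := by
  norm_num [mur, K1_one, K2_one, K31_one]

lemma murDeriv_one : murDeriv 1 = 2 := by
  norm_num [murDeriv, K1_one, K2_one]
  field_simp
  norm_num

theorem mur_expansion_leading :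
    mur 1 = 0 ∧
    Tendsto (fun ρ : ℝ => mur ρ / (1 - ρ)) (nhdsWithin 1 (Set.Iio 1))
      (nhds (-2)) := by
  refine ⟨mur_one, ?_⟩
  have hlim : Tendsto (fun x => murDeriv x / -1) (nhdsWithin 1 (Iio 1)) (nhds (-2)) := by
    have h := (continuous_murDeriv.tendsto 1).div_const (-1)
    rw [murDeriv_one, show (2 : ℝ) / -1 = -2 by norm_num] at h
    exact h.mono_left nhdsWithin_le_nhds
  exact HasDerivAt.lhopital_zero_left_on_Ioc (by norm_num) (fun _ hx => hasDerivAt_mur hx)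
    (fun x _ => (hasDerivAt_id' (x := x)).const_sub 1) continuous_mur.continuousOn
    (by fun_prop) (fun _ _ => by norm_num) mur_one (sub_self 1) hlim
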